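/- arXiv:1501.04373 — 2 statements merged into one kernel-verified Lean document; each statement's English description precedes it below -/
import Mathlib

section
/- Let $(X,\mu)$ be a probability space, let $S, S', T, T' : X \to X$ be measurable measure-preserving maps, and let $\delta > 0$. Let $(D^1_i)_{i=1}^p$, $(E^1_i)_{i=1}^p$, $(D^2_j)_{j=1}^q$, $(E^2_j)_{j=1}^q$ be finite measurable partitions of $X$ satisfying $\sum_{i_1,i_2=1}^p |\mu(S^{-1}(D^1_{i_1}) \cap D^1_{i_2}) - \mu(S'^{-1}(E^1_{i_1}) \cap E^1_{i_2})| < \delta$ and $\sum_{j_1,j_2=1}^q |\mu(T^{-1}(D^2_{j_1}) \cap D^2_{j_2}) - \mu(T'^{-1}(E^2_{j_1}) \cap E^2_{j_2})| < \delta$. Let $I_1, \dots, I_k \subseteq \{1,\dots,p\} \times \{1,\dots,q\}$ be pairwise disjoint sets, and set $D_l = \bigcup_{(i,j) \in I_l} D^1_i \times D^2_j$ and $B_l = \bigcup_{(i,j) \in I_l} E^1_i \times E^2_j$ for $l \leq k$. Then $\sum_{l,m=1}^k |\mu^2((S \times T)^{-1}(D_l) \cap D_m) - \mu^2((S' \times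 T')^{-1}(B_l) \cap B_m)| < 2\delta$, where $\mu^2 = \mu \otimes \mu$ is the product measure on $X \times X$. -/
open MeasureTheory Finset

/-- A finite measurable partition: the pieces are measurable, pairwise disjoint, and
cover the whole space. -/
def IsPartition {Y : Type*} [MeasurableSpace Y] {n : ℕ} (A : Fin n → Set Y) : Prop :=
  (∀ i, MeasurableSet (A i)) ∧ (∀ i j : Fin n, i ≠ j → Disjoint (A i) (A j)) ∧
    (⋃ i, A i) = Set.univ

lemma partSum {X : Type*} [MeasurableSpace X] (μ : Measure X)
    {n : ℕ} {A : Fin n → Set X} (hA : IsPartition A) {B : Set X} (hB : MeasurableSet B) :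
    ∑ i, μ (B ∩ A i) = μ B := by
  have h : ⋃ i, B ∩ A i = B := by rw [← Set.inter_iUnion, hA.2.2, Set.inter_univ]
  rw [← tsum_fintype (L := .unconditional _), ← measure_iUnion ?_ (fun i => hB.inter (hA.1 i)), h]
  exact fun i j hij =>
    ((hA.2.1 i j hij).mono Set.inter_subset_right Set.inter_subset_right)

lemma sumOne {X : Type*} [MeasurableSpace X] (μ : Measure X) [IsProbabilityMeasure μ]
    {f : X → X} (hf : MeasurePreserving f μ μ)
    {n : ℕ} {A : Fin n → Set X} (hA : IsPartition A) :
    ∑ i, ∑ j, (μ (f ⁻¹' A i ∩ A j)).toReal = 1 := by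
  have h1 : ∀ i, ∑ j, μ (f ⁻¹' A i ∩ A j) = μ (A i) := fun i => by
    rw [partSum μ hA (hf.measurable (hA.1 i)),
      hf.measure_preimage (hA.1 i).nullMeasurableSet]
  have h2 : ∑ i, μ (A i) = 1 := by
    have := partSum μ hA MeasurableSet.univ
    simpa [Set.univ_inter] using this
  calc ∑ i, ∑ j, (μ (f ⁻¹' A i ∩ A j)).toReal
      = ∑ i, (∑ j, μ (f ⁻¹' A i ∩ A j)).toReal := by
        exact Finset.sum_congr rfl fun i _ =>
          (ENNReal.toReal_sum (fun j _ => measure_ne_top μ _)).symm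
    _ = ∑ i, (μ (A i)).toReal := by simp only [h1]
    _ = (∑ i, μ (A i)).toReal := (ENNReal.toReal_sum (fun i _ => measure_ne_top μ _)).symm
    _ = 1 := by rw [h2]; simp

lemma prodMeas {X : Type*} [MeasurableSpace X] (μ : Measure X) [IsProbabilityMeasure μ]
    {S T : X → X} (hS : Measurable S) (hT : Measurable T)
    {p q : ℕ} {D1 : Fin p → Set X} {D2 : Fin q → Set X}
    (hD1 : IsPartition D1) (hD2 : IsPartition D2)
    (J J' : Finset (Fin p × Fin q)) :
    ((μ.prod μ) ((Prod.map S T) ⁻¹' (⋃ ij ∈ J, D1 ij.1 ×ˢ D2 ij.2)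
        ∩ ⋃ ij ∈ J', D1 ij.1 ×ˢ D2 ij.2)).toReal
      = ∑ w ∈ J ×ˢ J', (μ (S ⁻¹' D1 w.1.1 ∩ D1 w.2.1)).toReal
          * (μ (T ⁻¹' D2 w.1.2 ∩ D2 w.2.2)).toReal := by
  have hset : (Prod.map S T) ⁻¹' (⋃ ij ∈ J, D1 ij.1 ×ˢ D2 ij.2)
        ∩ ⋃ ij ∈ J', D1 ij.1 ×ˢ D2 ij.2
      = ⋃ w ∈ (J ×ˢ J' : Finset _),
          (S ⁻¹' D1 w.1.1 ∩ D1 w.2.1) ×ˢ (T ⁻¹' D2 w.1.2 ∩ D2 w.2.2) := by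
    ext ⟨x, y⟩
    simp only [Set.mem_inter_iff, Set.mem_preimage, Set.mem_iUnion, Set.mem_prod,
      Finset.mem_product, Prod.map_apply, exists_prop, Prod.exists]
    aesop
  have hdisj : ((J ×ˢ J' : Finset _) : Set _).PairwiseDisjoint
      (fun w : (Fin p × Fin q) × (Fin p × Fin q) =>
        (S ⁻¹' D1 w.1.1 ∩ D1 w.2.1) ×ˢ (T ⁻¹' D2 w.1.2 ∩ D2 w.2.2)) := by
    intro w _ w' _ hww
    have hcase : w.1.1 ≠ w'.1.1 ∨ w.1.2 ≠ w'.1.2 ∨ w.2.1 ≠ w'.2.1 ∨ w.2.2 ≠ w'.2.2 := by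
      by_contra h
      push_neg at h
      exact hww (Prod.ext (Prod.ext h.1 h.2.1) (Prod.ext h.2.2.1 h.2.2.2))
    rcases hcase with h | h | h | h
    · exact Set.disjoint_prod.mpr (Or.inl <| Disjoint.mono Set.inter_subset_left
        Set.inter_subset_left <| Disjoint.preimage S (hD1.2.1 _ _ h))
    · exact Set.disjoint_prod.mpr (Or.inr <| Disjoint.mono Set.inter_subset_left
        Set.inter_subset_left <| Disjoint.preimage T (hD2.2.1 _ _ h))
    · exact Set.disjoint_prod.mpr (Or.inl <| Disjoint.mono Set.inter_subset_right
        Set.inter_subset_right <| hD1.2.1 _ _ h)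
    · exact Set.disjoint_prod.mpr (Or.inr <| Disjoint.mono Set.inter_subset_right
        Set.inter_subset_right <| hD2.2.1 _ _ h)
  have hmeas : ∀ w ∈ (J ×ˢ J' : Finset _), MeasurableSet
      ((S ⁻¹' D1 w.1.1 ∩ D1 w.2.1) ×ˢ (T ⁻¹' D2 w.1.2 ∩ D2 w.2.2)) := fun w _ =>
    ((hS (hD1.1 _)).inter (hD1.1 _)).prod ((hT (hD2.1 _)).inter (hD2.1 _))
  rw [hset, measure_biUnion_finset hdisj hmeas,
    ENNReal.toReal_sum (fun w _ => measure_ne_top _ _)]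
  exact Finset.sum_congr rfl fun w _ => by rw [Measure.prod_prod, ENNReal.toReal_mul]

lemma factorize {p q : ℕ} (F : Fin p → Fin p → ℝ) (G : Fin q → Fin q → ℝ) :
    ∑ w : (Fin p × Fin q) × (Fin p × Fin q), F w.1.1 w.2.1 * G w.1.2 w.2.2
      = (∑ i₁, ∑ i₂, F i₁ i₂) * (∑ j₁, ∑ j₂, G j₁ j₂) := by
  rw [Fintype.sum_prod_type]
  have inner : ∀ u : Fin p × Fin q,
      ∑ v : Fin p × Fin q, F u.1 v.1 * G u.2 v.2
        = (∑ i₂, F u.1 i₂) * (∑ j₂, G u.2 j₂) := fun u => by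
    rw [Finset.sum_mul_sum, Fintype.sum_prod_type]
  simp only [inner]
  rw [Finset.sum_mul_sum]
  rw [Fintype.sum_prod_type]

/-- Suppose `S, S', T, T'` are measure-preserving maps of a probability
space `(X, μ)`, and `(D¹ᵢ)`, `(E¹ᵢ)` (of length `p`) and `(D²ⱼ)`, `(E²ⱼ)` (of length `q`)
are finite measurable partitions of `X` with
`∑_{i₁,i₂} |μ(S⁻¹(D¹_{i₁}) ∩ D¹_{i₂}) - μ(S'⁻¹(E¹_{i₁}) ∩ E¹_{i₂})| < δ` and
`∑_{j₁,j₂} |μ(T⁻¹(D²_{j₁}) ∩ D²_{j₂}) - μ(T'⁻¹(E²_{j₁}) ∩ E²_{j₂})| < δ`.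
If `I₁, …, I_k ⊆ {1,…,p} × {1,…,q}` are pairwise disjoint, and
`D_l = ⋃_{(i,j)∈I_l} D¹ᵢ × D²ⱼ`, `B_l = ⋃_{(i,j)∈I_l} E¹ᵢ × E²ⱼ`, then
`∑_{l,m} |μ²((S × T)⁻¹(D_l) ∩ D_m) - μ²((S' × T')⁻¹(B_l) ∩ B_m)| < 2δ`. -/
theorem stmt_4 {X : Type*} [MeasurableSpace X] (μ : Measure X) [IsProbabilityMeasure μ]
    (S S' T T' : X → X) (hS : MeasurePreserving S μ μ) (hS' : MeasurePreserving S' μ μ)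
    (hT : MeasurePreserving T μ μ) (hT' : MeasurePreserving T' μ μ)
    (δ : ℝ) (hδ : 0 < δ)
    {p q : ℕ} (D1 E1 : Fin p → Set X) (D2 E2 : Fin q → Set X)
    (hD1 : IsPartition D1) (hE1 : IsPartition E1)
    (hD2 : IsPartition D2) (hE2 : IsPartition E2)
    (h1 : ∑ i₁ : Fin p, ∑ i₂ : Fin p,
        |(μ (S ⁻¹' D1 i₁ ∩ D1 i₂)).toReal - (μ (S' ⁻¹' E1 i₁ ∩ E1 i₂)).toReal| < δ)
    (h2 : ∑ j₁ : Fin q, ∑ j₂ : Fin q,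
        |(μ (T ⁻¹' D2 j₁ ∩ D2 j₂)).toReal - (μ (T' ⁻¹' E2 j₁ ∩ E2 j₂)).toReal| < δ)
    {k : ℕ} (I : Fin k → Finset (Fin p × Fin q))
    (hI : ∀ l m : Fin k, l ≠ m → Disjoint (I l) (I m)) :
    ∑ l : Fin k, ∑ m : Fin k,
        |((μ.prod μ) ((Prod.map S T) ⁻¹' (⋃ ij ∈ I l, D1 ij.1 ×ˢ D2 ij.2)
              ∩ ⋃ ij ∈ I m, D1 ij.1 ×ˢ D2 ij.2)).toReal
          - ((μ.prod μ) ((Prod.map S' T') ⁻¹' (⋃ ij ∈ I l, E1 ij.1 ×ˢ E2 ij.2)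
              ∩ ⋃ ij ∈ I m, E1 ij.1 ×ˢ E2 ij.2)).toReal| < 2 * δ := by
  classical
  set a : Fin p → Fin p → ℝ := fun i i' => (μ (S ⁻¹' D1 i ∩ D1 i')).toReal with ha
  set a' : Fin p → Fin p → ℝ := fun i i' => (μ (S' ⁻¹' E1 i ∩ E1 i')).toReal with ha'
  set b : Fin q → Fin q → ℝ := fun j j' => (μ (T ⁻¹' D2 j ∩ D2 j')).toReal with hb
  set b' : Fin q → Fin q → ℝ := fun j j' => (μ (T' ⁻¹' E2 j ∩ E2 j')).toReal with hb'
  set g : (Fin p × Fin q) × (Fin p × Fin q) → ℝ := fun w =>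
    |a w.1.1 w.2.1 - a' w.1.1 w.2.1| * b w.1.2 w.2.2
      + a' w.1.1 w.2.1 * |b w.1.2 w.2.2 - b' w.1.2 w.2.2| with hg
  have hg0 : ∀ w, 0 ≤ g w := fun w => add_nonneg
    (mul_nonneg (abs_nonneg _) ENNReal.toReal_nonneg)
    (mul_nonneg ENNReal.toReal_nonneg (abs_nonneg _))
  have step1 : ∀ l m : Fin k,
      |((μ.prod μ) ((Prod.map S T) ⁻¹' (⋃ ij ∈ I l, D1 ij.1 ×ˢ D2 ij.2)
              ∩ ⋃ ij ∈ I m, D1 ij.1 ×ˢ D2 ij.2)).toReal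
          - ((μ.prod μ) ((Prod.map S' T') ⁻¹' (⋃ ij ∈ I l, E1 ij.1 ×ˢ E2 ij.2)
              ∩ ⋃ ij ∈ I m, E1 ij.1 ×ˢ E2 ij.2)).toReal|
        ≤ ∑ w ∈ I l ×ˢ I m, g w := by
    intro l m
    rw [prodMeas μ hS.measurable hT.measurable hD1 hD2 (I l) (I m),
      prodMeas μ hS'.measurable hT'.measurable hE1 hE2 (I l) (I m),
      ← Finset.sum_sub_distrib]
    refine (Finset.abs_sum_le_sum_abs _ _).trans (Finset.sum_le_sum fun w _ => ?_)
    have hid : a w.1.1 w.2.1 * b w.1.2 w.2.2 - a' w.1.1 w.2.1 * b' w.1.2 w.2.2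
        = (a w.1.1 w.2.1 - a' w.1.1 w.2.1) * b w.1.2 w.2.2
          + a' w.1.1 w.2.1 * (b w.1.2 w.2.2 - b' w.1.2 w.2.2) := by ring
    calc |a w.1.1 w.2.1 * b w.1.2 w.2.2 - a' w.1.1 w.2.1 * b' w.1.2 w.2.2|
        ≤ |(a w.1.1 w.2.1 - a' w.1.1 w.2.1) * b w.1.2 w.2.2|
          + |a' w.1.1 w.2.1 * (b w.1.2 w.2.2 - b' w.1.2 w.2.2)| := by
          rw [hid]; exact abs_add_le _ _
      _ ≤ g w := by
          rw [abs_mul, abs_mul, abs_of_nonneg (ENNReal.toReal_nonneg : (0:ℝ) ≤ b w.1.2 w.2.2),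
            abs_of_nonneg (ENNReal.toReal_nonneg : (0:ℝ) ≤ a' w.1.1 w.2.1)]
  have hdisjLM : ((Finset.univ : Finset (Fin k × Fin k)) : Set _).PairwiseDisjoint
      (fun lm : Fin k × Fin k => I lm.1 ×ˢ I lm.2) := by
    intro lm _ lm' _ hne
    rcases (fun h => hne (Prod.ext h.1 h.2) : ¬(lm.1 = lm'.1 ∧ lm.2 = lm'.2))
      |> not_and_or.mp with h | h
    · exact Finset.disjoint_product.mpr (Or.inl (hI _ _ h))
    · exact Finset.disjoint_product.mpr (Or.inr (hI _ _ h))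
  have step2 : ∑ l : Fin k, ∑ m : Fin k, ∑ w ∈ I l ×ˢ I m, g w
      ≤ ∑ w : (Fin p × Fin q) × (Fin p × Fin q), g w := by
    have hre : ∑ lm : Fin k × Fin k, ∑ w ∈ I lm.1 ×ˢ I lm.2, g w
        = ∑ l : Fin k, ∑ m : Fin k, ∑ w ∈ I l ×ˢ I m, g w :=
      Fintype.sum_prod_type _
    rw [← hre, ← Finset.sum_biUnion hdisjLM]
    exact Finset.sum_le_sum_of_subset_of_nonneg (Finset.subset_univ _)
      (fun w _ _ => hg0 w)
  have step3 : ∑ w : (Fin p × Fin q) × (Fin p × Fin q), g w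
      = (∑ i₁, ∑ i₂, |a i₁ i₂ - a' i₁ i₂|) * (∑ j₁, ∑ j₂, b j₁ j₂)
        + (∑ i₁, ∑ i₂, a' i₁ i₂) * (∑ j₁, ∑ j₂, |b j₁ j₂ - b' j₁ j₂|) := by
    rw [← factorize (fun i₁ i₂ => |a i₁ i₂ - a' i₁ i₂|) b,
      ← factorize a' (fun j₁ j₂ => |b j₁ j₂ - b' j₁ j₂|), ← Finset.sum_add_distrib]
  have hbsum : ∑ j₁, ∑ j₂, b j₁ j₂ = 1 := sumOne μ hT hD2
  have hasum : ∑ i₁, ∑ i₂, a' i₁ i₂ = 1 := sumOne μ hS' hE1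
  have final : ∑ l : Fin k, ∑ m : Fin k,
      |((μ.prod μ) ((Prod.map S T) ⁻¹' (⋃ ij ∈ I l, D1 ij.1 ×ˢ D2 ij.2)
            ∩ ⋃ ij ∈ I m, D1 ij.1 ×ˢ D2 ij.2)).toReal
        - ((μ.prod μ) ((Prod.map S' T') ⁻¹' (⋃ ij ∈ I l, E1 ij.1 ×ˢ E2 ij.2)
            ∩ ⋃ ij ∈ I m, E1 ij.1 ×ˢ E2 ij.2)).toReal|
      ≤ ∑ w : (Fin p × Fin q) × (Fin p × Fin q), g w := by
    refine le_trans ?_ step2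
    exact Finset.sum_le_sum fun l _ => Finset.sum_le_sum fun m _ => step1 l m
  have h1' : ∑ i₁, ∑ i₂, |a i₁ i₂ - a' i₁ i₂| < δ := h1
  have h2' : ∑ j₁, ∑ j₂, |b j₁ j₂ - b' j₁ j₂| < δ := h2
  calc ∑ l : Fin k, ∑ m : Fin k, _ ≤ ∑ w : (Fin p × Fin q) × (Fin p × Fin q), g w := final
    _ = (∑ i₁, ∑ i₂, |a i₁ i₂ - a' i₁ i₂|) * 1 + 1 * (∑ j₁, ∑ j₂, |b j₁ j₂ - b' j₁ j₂|) := by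
        rw [step3, hbsum, hasum]
    _ < 2 * δ := by rw [mul_one, one_mul]; linarith
end

section
/- Let $\Gamma$ be a countable group with a fixed enumeration $\Gamma = (\gamma_s)_{s=1}^\infty$ and $(X,\mu)$ a standard probability space. Let $a_n, a, b_n, b$ ($n \in \mathbb{N}$) be measure-preserving actions of $\Gamma$ on $(X,\mu)$ such that for every $t \in \mathbb{N}$, $\sup_k d_H(C_{t,k}(a_n), C_{t,k}(a)) \to 0$ and $\sup_k d_H(C_{t,k}(b_n), C_{t,k}(b)) \to 0$ as $n \to \infty$. Then for every $t \in \mathbb{N}$, $\sup_k d_H(C_{t,k}(a_n \times b_n), C_{t,k}(a \times b)) \to 0$ as $n \to \infty$, where $a \times b$ denotes the diagonal product action of $\Gamma$ on $(X \times X, \mu \otimes \mu)$ given by $\gamma^{a \times b}(x,y) = (\gamma^a x, \gamma^b y)$ and its sets $C_{t,k}$ are formed using measurable partitions of $X \times X$. -/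
open MeasureTheory Metric Filter

noncomputable section

/-- A measure-preserving action of a group `Γ` on a measure space `(X, μ)`. -/
structure MPAction (Γ : Type*) [Group Γ] (X : Type*) [MeasurableSpace X]
    (μ : Measure X) where
  toFun : Γ → X → X
  measurePreserving : ∀ γ : Γ, MeasurePreserving (toFun γ) μ μ
  map_one : ∀ x : X, toFun 1 x = x
  map_mul : ∀ (γ δ : Γ) (x : X), toFun (γ * δ) x = toFun γ (toFun δ x)

/-- The diagonal product action `a × b` on `(X × X, μ ⊗ μ)`:
`γ^{a×b}(x, y) = (γᵃx, γᵇy)`. -/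
def MPAction.prod {Γ X : Type*} [Group Γ] [MeasurableSpace X]
    {μ : Measure X} [SFinite μ] (a b : MPAction Γ X μ) :
    MPAction Γ (X × X) (μ.prod μ) where
  toFun γ := Prod.map (a.toFun γ) (b.toFun γ)
  measurePreserving γ := (a.measurePreserving γ).prod (b.measurePreserving γ)
  map_one x := by simp [Prod.map, a.map_one, b.map_one]
  map_mul γ δ x := by simp [Prod.map, a.map_mul, b.map_mul]

/-- The point `M^𝒜_{t,k}(c) ∈ [0,1]^{t × k × k}` whose `(s, l, m)` coordinate is
`ν(γₛᶜ A_l ∩ A_m)`, where `(γₛ)` is the fixed enumeration `e` of `Γ`. The ambient space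
`[0,1]^{t × k × k}` carries the metric given by the sum of coordinate distances, i.e. the
`ℓ¹` (taxicab) metric, realized by `PiLp 1`. -/
def Mpoint {Γ Y : Type*} [Group Γ] [MeasurableSpace Y] (ν : Measure Y) (e : ℕ → Γ)
    (c : Γ → Y → Y) (t k : ℕ) (A : Fin k → Set Y) :
    PiLp 1 (fun _ : Fin t × Fin k × Fin k => ℝ) :=
  WithLp.toLp 1 (fun p => (ν (c (e p.1) ⁻¹' A p.2.1 ∩ A p.2.2)).toReal)

/-- `C_{t,k}(c)`: the closure in `[0,1]^{t × k × k}` (with the sum metric) of the set of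
points `M^𝒜_{t,k}(c)` over all measurable partitions `𝒜` of the space into `k` pieces. -/
def Cset {Γ Y : Type*} [Group Γ] [MeasurableSpace Y] (ν : Measure Y) (e : ℕ → Γ)
    (c : Γ → Y → Y) (t k : ℕ) : Set (PiLp 1 (fun _ : Fin t × Fin k × Fin k => ℝ)) :=
  closure {x | ∃ A : Fin k → Set Y, IsPartition A ∧ x = Mpoint ν e c t k A}

/-!
A measurable partition of `X × X` is, up to a set of small measure, a grid partition
`c ∘ (q × r)` with `q`, `r` finite measurable partitions of the two factors, because measurable
rectangles generate the product σ-algebra. For such a grid, the coordinates of `M(a × b)` are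
obtained from those of `M(a)` at `q` and `M(b)` at `r` by forming products of probability
vectors and then coarsening along `c`; both operations are `1`-Lipschitz for the `ℓ¹` distance.
Hence `d_H(C_{t,k}(aₙ × bₙ), C_{t,k}(a × b))` is bounded by
`sup_K d_H(C_{t,K}(aₙ), C_{t,K}(a)) + sup_K d_H(C_{t,K}(bₙ), C_{t,K}(b))`, uniformly in `k`.
-/

open scoped symmDiff

section Partition

variable {Y : Type*} [MeasurableSpace Y] {k : ℕ}

theorem isPartition_fibers {g : Y → Fin k} (hg : Measurable g) :
    IsPartition fun i => g ⁻¹' {i} :=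
  ⟨fun i => hg (measurableSet_singleton i),
    fun _ _ hij => Set.disjoint_left.2 fun _ hi hj => hij (hi.symm.trans hj),
    Set.eq_univ_of_forall fun y => Set.mem_iUnion.2 ⟨g y, rfl⟩⟩

theorem IsPartition.exists_eq_fibers {A : Fin k → Set Y} (hA : IsPartition A) :
    ∃ g : Y → Fin k, Measurable g ∧ A = fun i => g ⁻¹' {i} := by
  have hcover : ∀ y, ∃ i, y ∈ A i := fun y => Set.mem_iUnion.1 (hA.2.2 ▸ Set.mem_univ y)
  choose g hg using hcover
  have hA_eq : A = fun i => g ⁻¹' {i} := by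
    funext i
    ext y
    refine ⟨fun hy => ?_, fun hy => (hy : g y = i) ▸ hg y⟩
    by_contra hne
    exact Set.disjoint_left.1 (hA.2.1 _ _ hne) (hg y) hy
  refine ⟨g, ?_, hA_eq⟩
  subst hA_eq
  exact measurable_to_countable' hA.1

end Partition

def jointLaw {Y ι : Type*} [MeasurableSpace Y] (ν : Measure Y) (f : Y → Y) (g : Y → ι)
    (p : ι × ι) : ℝ :=
  ν.real ((fun y => (g (f y), g y)) ⁻¹' {p})

section JointLaw

variable {Y ι : Type*} [MeasurableSpace Y] [Fintype ι] [MeasurableSpace ι]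
  [MeasurableSingletonClass ι] {ν : Measure Y} {f : Y → Y} {g g' : Y → ι}

theorem sum_jointLaw [IsProbabilityMeasure ν] (hf : Measurable f) (hg : Measurable g) :
    ∑ p, jointLaw ν f g p = 1 := by
  simp only [jointLaw]
  rw [sum_measureReal_preimage_singleton (f := fun y => (g (f y), g y)) _
    fun p _ => ((hg.comp hf).prodMk hg) (measurableSet_singleton p)]
  simp

theorem sum_abs_measureReal_preimage_sub_le {β : Type*} [Fintype β] [MeasurableSpace β]
    [MeasurableSingletonClass β] [IsFiniteMeasure ν] {Z Z' : Y → β} (hZ : Measurable Z)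
    (hZ' : Measurable Z') :
    ∑ b, |ν.real (Z ⁻¹' {b}) - ν.real (Z' ⁻¹' {b})| ≤ 2 * ν.real {y | Z y ≠ Z' y} := by
  set D := {y | Z y ≠ Z' y}
  have hD : MeasurableSet D := (measurableSet_eq_fun hZ hZ').compl
  have sum_inter : ∀ {W : Y → β}, Measurable W → ∑ b, ν.real (W ⁻¹' {b} ∩ D) = ν.real D := by
    intro W hW
    have := sum_measureReal_preimage_singleton (μ := ν.restrict D) Finset.univ
      fun b _ => hW (measurableSet_singleton b)
    simpa [measureReal_restrict_apply (hW (measurableSet_singleton _))] using this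
  -- Off `D` the two fibres agree, so only their parts inside `D` contribute.
  have hterm : ∀ b, |ν.real (Z ⁻¹' {b}) - ν.real (Z' ⁻¹' {b})|
      ≤ ν.real (Z ⁻¹' {b} ∩ D) + ν.real (Z' ⁻¹' {b} ∩ D) := by
    intro b
    have hout : Z ⁻¹' {b} \ D = Z' ⁻¹' {b} \ D := by
      ext y
      simp only [Set.mem_sdiff, Set.mem_preimage, Set.mem_singleton_iff, D, Set.mem_ofPred_eq,
        not_not]
      constructor <;> rintro ⟨h, he⟩ <;> exact ⟨by rw [← h, he], he⟩
    rw [← measureReal_inter_add_sdiff (s := Z ⁻¹' {b}) hD,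
      ← measureReal_inter_add_sdiff (s := Z' ⁻¹' {b}) hD, hout, add_sub_add_right_eq_sub]
    refine (abs_sub _ _).trans_eq ?_
    rw [abs_of_nonneg measureReal_nonneg, abs_of_nonneg measureReal_nonneg]
  calc ∑ b, |ν.real (Z ⁻¹' {b}) - ν.real (Z' ⁻¹' {b})|
      ≤ ∑ b, (ν.real (Z ⁻¹' {b} ∩ D) + ν.real (Z' ⁻¹' {b} ∩ D)) :=
        Finset.sum_le_sum fun b _ => hterm b
    _ = 2 * ν.real D := by rw [Finset.sum_add_distrib, sum_inter hZ, sum_inter hZ']; ring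

theorem sum_abs_jointLaw_sub_le [IsFiniteMeasure ν] (hf : MeasurePreserving f ν ν)
    (hg : Measurable g) (hg' : Measurable g') :
    ∑ p, |jointLaw ν f g p - jointLaw ν f g' p| ≤ 4 * ν.real {y | g y ≠ g' y} := by
  have hne : MeasurableSet {y | g y ≠ g' y} := (measurableSet_eq_fun hg hg').compl
  have hsub : {y | (g (f y), g y) ≠ (g' (f y), g' y)} ⊆ f ⁻¹' {y | g y ≠ g' y} ∪ {y | g y ≠ g' y} :=
    fun y hy => by
      by_contra h
      simp_all
  calc ∑ p, |jointLaw ν f g p - jointLaw ν f g' p|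
      ≤ 2 * ν.real {y | (g (f y), g y) ≠ (g' (f y), g' y)} :=
        sum_abs_measureReal_preimage_sub_le ((hg.comp hf.measurable).prodMk hg)
          ((hg'.comp hf.measurable).prodMk hg')
    _ ≤ 2 * (ν.real (f ⁻¹' {y | g y ≠ g' y}) + ν.real {y | g y ≠ g' y}) := by
        gcongr
        exact (measureReal_mono hsub).trans (measureReal_union_le _ _)
    _ = 4 * ν.real {y | g y ≠ g' y} := by
        rw [hf.measureReal_preimage hne.nullMeasurableSet]; ring

theorem jointLaw_comp {κ : Type*} [DecidableEq κ] [IsFiniteMeasure ν] (hf : Measurable f)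
    (hg : Measurable g) (c : ι → κ) (p : κ × κ) :
    jointLaw ν f (c ∘ g) p = ∑ w with (c w.1, c w.2) = p, jointLaw ν f g w := by
  simp only [jointLaw]
  rw [sum_measureReal_preimage_singleton (f := fun y => (g (f y), g y)) _
    fun w _ => ((hg.comp hf).prodMk hg) (measurableSet_singleton w)]
  congr 1
  ext y
  simp

end JointLaw

theorem jointLaw_prodMap {X Y ι κ : Type*} [MeasurableSpace X] [MeasurableSpace Y]
    (μ : Measure X) (ν : Measure Y) [SFinite ν] (fa : X → X) (fb : Y → Y) (q : X → ι)
    (r : Y → κ) (w : (ι × κ) × (ι × κ)) :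
    jointLaw (μ.prod ν) (Prod.map fa fb) (Prod.map q r) w
      = jointLaw μ fa q (w.1.1, w.2.1) * jointLaw ν fb r (w.1.2, w.2.2) := by
  rw [jointLaw, jointLaw, jointLaw, ← measureReal_prod_prod]
  congr 1
  ext ⟨x, y⟩
  simp only [Set.mem_preimage, Set.mem_singleton_iff, Set.mem_prod, Prod.map_apply, Prod.ext_iff]
  tauto

theorem sum_abs_sum_fiberwise_sub_le {α β : Type*} [Fintype α] [Fintype β] [DecidableEq β]
    (c : α → β) (F F' : α → ℝ) :
    ∑ b, |∑ a with c a = b, F a - ∑ a with c a = b, F' a| ≤ ∑ a, |F a - F' a| :=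
  calc ∑ b, |∑ a with c a = b, F a - ∑ a with c a = b, F' a|
      ≤ ∑ b, ∑ a with c a = b, |F a - F' a| := Finset.sum_le_sum fun b _ => by
        rw [← Finset.sum_sub_distrib]
        exact Finset.abs_sum_le_sum_abs _ _
    _ = ∑ a, |F a - F' a| := Finset.sum_fiberwise _ _ _

theorem sum_abs_mul_sub_mul_le {α β : Type*} [Fintype α] [Fintype β] {A A' : α → ℝ}
    {B B' : β → ℝ} (hA' : ∀ a, 0 ≤ A' a) (hB : ∀ b, 0 ≤ B b) (hA'_sum : ∑ a, A' a = 1)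
    (hB_sum : ∑ b, B b = 1) :
    ∑ a, ∑ b, |A a * B b - A' a * B' b| ≤ ∑ a, |A a - A' a| + ∑ b, |B b - B' b| := by
  have key : ∀ a b, |A a * B b - A' a * B' b| ≤ |A a - A' a| * B b + A' a * |B b - B' b| := by
    intro a b
    calc |A a * B b - A' a * B' b| = |(A a - A' a) * B b + A' a * (B b - B' b)| := by ring_nf
      _ ≤ |A a - A' a| * B b + A' a * |B b - B' b| := by
        refine (abs_add_le _ _).trans_eq ?_
        rw [abs_mul, abs_mul, abs_of_nonneg (hB b), abs_of_nonneg (hA' a)]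
  calc ∑ a, ∑ b, |A a * B b - A' a * B' b|
      ≤ ∑ a, ∑ b, (|A a - A' a| * B b + A' a * |B b - B' b|) := by
        gcongr with a _ b _
        exact key a b
    _ = (∑ a, |A a - A' a|) * ∑ b, B b + (∑ a, A' a) * ∑ b, |B b - B' b| := by
        simp only [Finset.sum_add_distrib, Finset.sum_mul_sum]
    _ = ∑ a, |A a - A' a| + ∑ b, |B b - B' b| := by rw [hA'_sum, hB_sum, mul_one, one_mul]

theorem sum_abs_jointLaw_comp_prodMap_sub_le {X Y ι κ β : Type*} [MeasurableSpace X]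
    [MeasurableSpace Y] [Fintype ι] [MeasurableSpace ι] [MeasurableSingletonClass ι]
    [Fintype κ] [MeasurableSpace κ] [MeasurableSingletonClass κ] [Fintype β] [DecidableEq β]
    {μ : Measure X} {ν : Measure Y} [IsProbabilityMeasure μ] [IsProbabilityMeasure ν]
    {fa fa' : X → X} {fb fb' : Y → Y} (hfa : Measurable fa) (hfa' : Measurable fa')
    (hfb : Measurable fb) (hfb' : Measurable fb') {q q' : X → ι} {r r' : Y → κ}
    (hq : Measurable q) (hq' : Measurable q') (hr : Measurable r) (hr' : Measurable r')
    (c : ι × κ → β) :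
    ∑ p, |jointLaw (μ.prod ν) (Prod.map fa fb) (c ∘ Prod.map q r) p
        - jointLaw (μ.prod ν) (Prod.map fa' fb') (c ∘ Prod.map q' r') p|
      ≤ ∑ p, |jointLaw μ fa q p - jointLaw μ fa' q' p|
        + ∑ p, |jointLaw ν fb r p - jointLaw ν fb' r' p| := by
  simp only [jointLaw_comp (hfa.prodMap hfb) (hq.prodMap hr),
    jointLaw_comp (hfa'.prodMap hfb') (hq'.prodMap hr')]
  refine (sum_abs_sum_fiberwise_sub_le (fun w : (ι × κ) × (ι × κ) => (c w.1, c w.2))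
    (jointLaw (μ.prod ν) (Prod.map fa fb) (Prod.map q r))
    (jointLaw (μ.prod ν) (Prod.map fa' fb') (Prod.map q' r'))).trans ?_
  simp only [jointLaw_prodMap]
  have reindex : ∀ F : ι × ι → κ × κ → ℝ,
      ∑ w : (ι × κ) × (ι × κ), F (w.1.1, w.2.1) (w.1.2, w.2.2) = ∑ a, ∑ b, F a b := fun F => by
    rw [← Fintype.sum_prod_type']
    exact Fintype.sum_equiv (Equiv.prodProdProdComm ι κ ι κ) _ _ fun _ => rfl
  rw [reindex fun a b => |jointLaw μ fa q a * jointLaw ν fb r b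
    - jointLaw μ fa' q' a * jointLaw ν fb' r' b|]
  exact sum_abs_mul_sub_mul_le (fun _ => measureReal_nonneg) (fun _ => measureReal_nonneg)
    (sum_jointLaw hfa' hq') (sum_jointLaw hfb hr)

section Mpoint

variable {Γ Y : Type*} [Group Γ] [MeasurableSpace Y] {ν : Measure Y} {e : ℕ → Γ}
  {c c' : Γ → Y → Y} {t k : ℕ}

theorem Mpoint_fibers_apply (g : Y → Fin k) (p : Fin t × Fin k × Fin k) :
    Mpoint ν e c t k (fun i => g ⁻¹' {i}) p = jointLaw ν (c (e p.1)) g p.2 := by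
  simp only [Mpoint, jointLaw, PiLp.toLp_apply]
  congr 2
  ext y
  simp [Prod.ext_iff]

theorem dist_Mpoint_fibers (g g' : Y → Fin k) :
    dist (Mpoint ν e c t k (fun i => g ⁻¹' {i})) (Mpoint ν e c' t k (fun i => g' ⁻¹' {i}))
      = ∑ s : Fin t, ∑ p, |jointLaw ν (c (e s)) g p - jointLaw ν (c' (e s)) g' p| := by
  simp [PiLp.dist_eq_of_L1, Fintype.sum_prod_type, Mpoint_fibers_apply, Real.dist_eq]

theorem norm_Mpoint [IsProbabilityMeasure ν] (hc : ∀ γ, Measurable (c γ))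
    {A : Fin k → Set Y} (hA : IsPartition A) : ‖Mpoint ν e c t k A‖ = t := by
  obtain ⟨g, hg, rfl⟩ := hA.exists_eq_fibers
  have slice : ∀ s : Fin t, ∑ p, ‖Mpoint ν e c t k (fun i => g ⁻¹' {i}) (s, p)‖ = 1 := fun s => by
    simp only [Mpoint_fibers_apply, Real.norm_eq_abs]
    rw [← sum_jointLaw (ν := ν) (hc (e s)) hg]
    exact Finset.sum_congr rfl fun p _ => abs_of_nonneg measureReal_nonneg
  rw [PiLp.norm_eq_of_L1, Fintype.sum_prod_type, Finset.sum_congr rfl fun s _ => slice s]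
  simp

theorem dist_Mpoint_le [IsProbabilityMeasure ν] (hc : ∀ γ, Measurable (c γ))
    (hc' : ∀ γ, Measurable (c' γ)) {A A' : Fin k → Set Y} (hA : IsPartition A)
    (hA' : IsPartition A') : dist (Mpoint ν e c t k A) (Mpoint ν e c' t k A') ≤ 2 * t :=
  (dist_le_norm_add_norm _ _).trans_eq <| by rw [norm_Mpoint hc hA, norm_Mpoint hc' hA']; ring

theorem dist_Mpoint_fibers_le_measureReal_ne [IsFiniteMeasure ν]
    (hc : ∀ γ, MeasurePreserving (c γ) ν ν)
    {g g' : Y → Fin k} (hg : Measurable g) (hg' : Measurable g') :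
    dist (Mpoint ν e c t k (fun i => g ⁻¹' {i})) (Mpoint ν e c t k (fun i => g' ⁻¹' {i}))
      ≤ 4 * t * ν.real {y | g y ≠ g' y} := by
  rw [dist_Mpoint_fibers]
  refine (Finset.sum_le_sum fun (s : Fin t) _ =>
    sum_abs_jointLaw_sub_le (hc (e s)) hg hg').trans_eq ?_
  simp only [Finset.sum_const, Finset.card_univ, Fintype.card_fin, nsmul_eq_mul]
  ring

theorem dist_Mpoint_prodMap_le {X : Type*} [MeasurableSpace X] {μ : Measure X}
    [IsProbabilityMeasure μ] [IsProbabilityMeasure ν] {α α' : Γ → X → X} {β β' : Γ → Y → Y}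
    (hα : ∀ γ, Measurable (α γ)) (hα' : ∀ γ, Measurable (α' γ))
    (hβ : ∀ γ, Measurable (β γ)) (hβ' : ∀ γ, Measurable (β' γ)) {K : ℕ}
    {q q' : X → Fin K} {r r' : Y → Fin K} (hq : Measurable q) (hq' : Measurable q')
    (hr : Measurable r) (hr' : Measurable r') (c : Fin K × Fin K → Fin k) :
    dist (Mpoint (μ.prod ν) e (fun γ => Prod.map (α γ) (β γ)) t k
          (fun i => (c ∘ Prod.map q r) ⁻¹' {i}))
        (Mpoint (μ.prod ν) e (fun γ => Prod.map (α' γ) (β' γ)) t k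
          (fun i => (c ∘ Prod.map q' r') ⁻¹' {i}))
      ≤ dist (Mpoint μ e α t K (fun i => q ⁻¹' {i})) (Mpoint μ e α' t K (fun i => q' ⁻¹' {i}))
        + dist (Mpoint ν e β t K (fun i => r ⁻¹' {i}))
          (Mpoint ν e β' t K (fun i => r' ⁻¹' {i})) := by
  rw [dist_Mpoint_fibers, dist_Mpoint_fibers, dist_Mpoint_fibers, ← Finset.sum_add_distrib]
  exact Finset.sum_le_sum fun (s : Fin t) _ => sum_abs_jointLaw_comp_prodMap_sub_le (hα _) (hα' _)
    (hβ _) (hβ' _) hq hq' hr hr' c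

end Mpoint

section Grid

variable {X Y : Type*} [MeasurableSpace X] [MeasurableSpace Y]

variable (X Y) in
def gridSets : Set (Set (X × Y)) :=
  {S | ∃ (K : ℕ) (q : X → Fin K) (r : Y → Fin K), Measurable q ∧ Measurable r ∧
    ∃ T : Set (Fin K × Fin K), S = Prod.map q r ⁻¹' T}

theorem exists_common_grid {ι : Type*} [Fintype ι] {S : ι → Set (X × Y)}
    (hS : ∀ i, S i ∈ gridSets X Y) :
    ∃ (K : ℕ) (q : X → Fin K) (r : Y → Fin K), Measurable q ∧ Measurable r ∧
      ∃ T : ι → Set (Fin K × Fin K), ∀ i, S i = Prod.map q r ⁻¹' T i := by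
  classical
  choose K q r hq hr T hT using hS
  let E := Fintype.equivFin (∀ i, Fin (K i))
  refine ⟨_, fun x => E fun i => q i x, fun y => E fun i => r i y,
    (measurable_of_countable E).comp (measurable_pi_lambda _ hq),
    (measurable_of_countable E).comp (measurable_pi_lambda _ hr),
    fun i => {w | (E.symm w.1 i, E.symm w.2 i) ∈ T i}, fun i => ?_⟩
  rw [hT i]
  ext ⟨x, y⟩
  simp

theorem isSetAlgebra_gridSets : IsSetAlgebra (gridSets X Y) where
  empty_mem := ⟨1, 0, 0, measurable_const, measurable_const, ∅, rfl⟩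
  compl_mem := by
    rintro _ ⟨K, q, r, hq, hr, T, rfl⟩
    exact ⟨K, q, r, hq, hr, Tᶜ, rfl⟩
  union_mem S S' hS hS' := by
    obtain ⟨K, q, r, hq, hr, T, hT⟩ :=
      exists_common_grid (S := fun b : Bool => cond b S S') (Bool.forall_bool.2 ⟨hS', hS⟩)
    exact ⟨K, q, r, hq, hr, T true ∪ T false, congr_arg₂ (· ∪ ·) (hT true) (hT false)⟩

theorem prod_eq_generateFrom_gridSets :
    (Prod.instMeasurableSpace : MeasurableSpace (X × Y))
      = MeasurableSpace.generateFrom (gridSets X Y) := by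
  classical
  refine le_antisymm ?_ (MeasurableSpace.generateFrom_le ?_)
  · rw [← generateFrom_prod]
    refine MeasurableSpace.generateFrom_mono ?_
    rintro _ ⟨A, hA, B, hB, rfl⟩
    refine ⟨2, fun x => if x ∈ A then 1 else 0, fun y => if y ∈ B then 1 else 0,
      measurable_const.ite hA measurable_const, measurable_const.ite hB measurable_const,
      {(1, 1)}, ?_⟩
    ext ⟨x, y⟩
    simp only [Set.mem_prod, Set.mem_preimage, Prod.map_apply, Set.mem_singleton_iff,
      Prod.ext_iff]
    split_ifs <;> simp_all
  · rintro _ ⟨K, q, r, hq, hr, T, rfl⟩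
    exact hq.prodMap hr T.to_countable.measurableSet

theorem exists_grid_approx (μ : Measure X) (ν : Measure Y) [IsFiniteMeasure μ]
    [IsFiniteMeasure ν] {ι : Type*} [Fintype ι] [Nonempty ι] [MeasurableSpace ι]
    [MeasurableSingletonClass ι] {g : X × Y → ι} (hg : Measurable g) {ε : ℝ} (hε : 0 < ε) :
    ∃ (K : ℕ) (q : X → Fin K) (r : Y → Fin K) (c : Fin K × Fin K → ι),
      Measurable q ∧ Measurable r ∧ (μ.prod ν).real {z | g z ≠ (c ∘ Prod.map q r) z} < ε := by
  classical
  have hdense := Measure.MeasureDense.of_generateFrom_isSetAlgebra_finite (μ.prod ν)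
    isSetAlgebra_gridSets prod_eq_generateFrom_gridSets
  have happrox : ∀ i, ∃ S ∈ gridSets X Y,
      (μ.prod ν).real ((g ⁻¹' {i}) ∆ S) < ε / Fintype.card ι := fun i => by
    obtain ⟨S, hS, hlt⟩ := hdense.approx _ (hg (measurableSet_singleton i))
      (measure_ne_top _ _) (ε / Fintype.card ι) (by positivity)
    exact ⟨S, hS, ENNReal.toReal_lt_of_lt_ofReal hlt⟩
  choose S hS hS_lt using happrox
  obtain ⟨K, q, r, hq, hr, T, hT⟩ := exists_common_grid hS
  let c : Fin K × Fin K → ι := fun w =>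
    if h : ∃ i, w ∈ T i then h.choose else Classical.arbitrary ι
  refine ⟨K, q, r, c, hq, hr, ?_⟩
  -- Outside every `(g ⁻¹' {i}) ∆ S i`, the cell of `z` lies in `T i` exactly for `i = g z`.
  have hsub : {z | g z ≠ (c ∘ Prod.map q r) z} ⊆ ⋃ i, (g ⁻¹' {i}) ∆ S i := by
    intro z hz
    by_contra hout
    simp only [Set.mem_iUnion, not_exists] at hout
    have hmem : ∀ i, Prod.map q r z ∈ T i ↔ g z = i := fun i => by
      have := hout i
      rw [hT i, Set.mem_symmDiff] at this
      simp only [Set.mem_preimage, Set.mem_singleton_iff] at this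
      tauto
    have hex : ∃ i, Prod.map q r z ∈ T i := ⟨g z, (hmem _).2 rfl⟩
    have hc : (c ∘ Prod.map q r) z = hex.choose := dif_pos hex
    exact hz (hc ▸ (hmem _).1 hex.choose_spec)
  calc (μ.prod ν).real {z | g z ≠ (c ∘ Prod.map q r) z}
      ≤ (μ.prod ν).real (⋃ i, (g ⁻¹' {i}) ∆ S i) := measureReal_mono hsub
    _ ≤ ∑ i, (μ.prod ν).real ((g ⁻¹' {i}) ∆ S i) := measureReal_iUnion_fintype_le _
    _ < ∑ _i : ι, ε / Fintype.card ι :=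
        Finset.sum_lt_sum_of_nonempty Finset.univ_nonempty fun i _ => hS_lt i
    _ = ε := by
        rw [Finset.sum_const, Finset.card_univ, nsmul_eq_mul]
        field_simp

end Grid

section Hausdorff

variable {Γ : Type*} [Group Γ] {e : ℕ → Γ}

section

variable {Y : Type*} [MeasurableSpace Y] {ν : Measure Y} [IsProbabilityMeasure ν]
  {c c' : Γ → Y → Y} {t k : ℕ}

theorem hausdorffEDist_Cset_le (hc : ∀ γ, Measurable (c γ)) (hc' : ∀ γ, Measurable (c' γ)) :
    hausdorffEDist (Cset ν e c t k) (Cset ν e c' t k) ≤ ENNReal.ofReal (2 * t) := by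
  rw [Cset, Cset, hausdorffEDist_closure]
  refine hausdorffEDist_le_of_mem_edist ?_ ?_ <;> rintro _ ⟨A, hA, rfl⟩ <;>
    refine ⟨_, ⟨A, hA, rfl⟩, ?_⟩ <;> rw [edist_dist] <;> gcongr
  exacts [dist_Mpoint_le hc hc' hA hA, dist_Mpoint_le hc' hc hA hA]

theorem hausdorffDist_Cset_le (hc : ∀ γ, Measurable (c γ)) (hc' : ∀ γ, Measurable (c' γ)) :
    hausdorffDist (Cset ν e c t k) (Cset ν e c' t k) ≤ 2 * t :=
  ENNReal.toReal_le_of_le_ofReal (by positivity) (hausdorffEDist_Cset_le hc hc')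

theorem exists_fibers_dist_Mpoint_lt (hc : ∀ γ, Measurable (c γ))
    (hc' : ∀ γ, Measurable (c' γ)) {D δ : ℝ}
    (hD : hausdorffDist (Cset ν e c t k) (Cset ν e c' t k) ≤ D) (hδ : 0 < δ)
    {g : Y → Fin k} (hg : Measurable g) :
    ∃ g' : Y → Fin k, Measurable g' ∧
      dist (Mpoint ν e c t k (fun i => g ⁻¹' {i})) (Mpoint ν e c' t k (fun i => g' ⁻¹' {i}))
        < D + δ := by
  have hmem : Mpoint ν e c t k (fun i => g ⁻¹' {i}) ∈ Cset ν e c t k :=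
    subset_closure ⟨_, isPartition_fibers hg, rfl⟩
  obtain ⟨y, hy, hxy⟩ := exists_dist_lt_of_hausdorffDist_lt hmem
    (hD.trans_lt (lt_add_of_pos_right D (half_pos hδ)))
    (ne_top_of_le_ne_top ENNReal.ofReal_ne_top (hausdorffEDist_Cset_le hc hc'))
  obtain ⟨_, ⟨A, hA, rfl⟩, hyz⟩ := Metric.mem_closure_iff.1 hy (δ / 2) (half_pos hδ)
  obtain ⟨g', hg', rfl⟩ := hA.exists_eq_fibers
  have := dist_triangle (Mpoint ν e c t k (fun i => g ⁻¹' {i})) y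
    (Mpoint ν e c' t k (fun i => g' ⁻¹' {i}))
  exact ⟨g', hg', by linarith⟩

end

variable {X Y : Type*} [MeasurableSpace X] [MeasurableSpace Y] {μ : Measure X} {ν : Measure Y}
  [IsProbabilityMeasure μ] [IsProbabilityMeasure ν] {α α' : Γ → X → X} {β β' : Γ → Y → Y}
  {t : ℕ} {D E : ℝ}

/-- Approximate the partition by a grid `c ∘ (q × r)`, then move the factor partitions `q`, `r`
to near-optimal partitions `q'`, `r'` for `α'`, `β'`; the grid `c ∘ (q' × r')` is the witness. -/
theorem infDist_Mpoint_prod_le (hα : ∀ γ, MeasurePreserving (α γ) μ μ)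
    (hβ : ∀ γ, MeasurePreserving (β γ) ν ν) (hα' : ∀ γ, Measurable (α' γ))
    (hβ' : ∀ γ, Measurable (β' γ))
    (hD : ∀ K, hausdorffDist (Cset μ e α t K) (Cset μ e α' t K) ≤ D)
    (hE : ∀ K, hausdorffDist (Cset ν e β t K) (Cset ν e β' t K) ≤ E)
    {k : ℕ} {A : Fin k → Set (X × Y)} (hA : IsPartition A) :
    infDist (Mpoint (μ.prod ν) e (fun γ => Prod.map (α γ) (β γ)) t k A)
      (Cset (μ.prod ν) e (fun γ => Prod.map (α' γ) (β' γ)) t k) ≤ D + E := by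
  obtain ⟨g, hg, rfl⟩ := hA.exists_eq_fibers
  have : Nonempty (Fin k) := ⟨g (nonempty_of_isProbabilityMeasure (μ.prod ν)).some⟩
  refine le_of_forall_pos_lt_add fun ε hε => ?_
  set δ := ε / (4 * t + 2)
  have hδ : 0 < δ := by positivity
  obtain ⟨K, q, r, c, hq, hr, hgrid⟩ := exists_grid_approx μ ν hg hδ
  obtain ⟨q', hq', hdist_q⟩ :=
    exists_fibers_dist_Mpoint_lt (fun γ => (hα γ).measurable) hα' (hD K) hδ hq
  obtain ⟨r', hr', hdist_r⟩ :=
    exists_fibers_dist_Mpoint_lt (fun γ => (hβ γ).measurable) hβ' (hE K) hδ hr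
  have hgrid_meas : Measurable (c ∘ Prod.map q r) :=
    (measurable_of_countable c).comp (hq.prodMap hr)
  have hmem : Mpoint (μ.prod ν) e (fun γ => Prod.map (α' γ) (β' γ)) t k
      (fun i => (c ∘ Prod.map q' r') ⁻¹' {i})
      ∈ Cset (μ.prod ν) e (fun γ => Prod.map (α' γ) (β' γ)) t k :=
    subset_closure ⟨_, isPartition_fibers ((measurable_of_countable c).comp (hq'.prodMap hr')),
      rfl⟩
  have happrox := dist_Mpoint_fibers_le_measureReal_ne (t := t) (e := e)
    (fun γ => (hα γ).prod (hβ γ)) hg hgrid_meas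
  have hprod := dist_Mpoint_prodMap_le (fun γ => (hα γ).measurable) hα'
    (fun γ => (hβ γ).measurable) hβ' hq hq' hr hr' c (μ := μ) (ν := ν) (e := e) (t := t)
  have hgrid' : 4 * t * (μ.prod ν).real {z | g z ≠ (c ∘ Prod.map q r) z} ≤ 4 * t * δ := by
    gcongr
  have hδε : (4 * t + 2) * δ = ε := by
    simp only [δ]
    field_simp
  calc infDist _ _ ≤ _ := infDist_le_dist_of_mem hmem
    _ ≤ _ := dist_triangle _
          (Mpoint (μ.prod ν) e (fun γ => Prod.map (α γ) (β γ)) t k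
            (fun i => (c ∘ Prod.map q r) ⁻¹' {i})) _
    _ < D + E + ε := by linarith

theorem hausdorffDist_Cset_prod_le (hα : ∀ γ, MeasurePreserving (α γ) μ μ)
    (hβ : ∀ γ, MeasurePreserving (β γ) ν ν) (hα' : ∀ γ, MeasurePreserving (α' γ) μ μ)
    (hβ' : ∀ γ, MeasurePreserving (β' γ) ν ν)
    (hD : ∀ K, hausdorffDist (Cset μ e α t K) (Cset μ e α' t K) ≤ D)
    (hE : ∀ K, hausdorffDist (Cset ν e β t K) (Cset ν e β' t K) ≤ E) (k : ℕ) :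
    hausdorffDist (Cset (μ.prod ν) e (fun γ => Prod.map (α γ) (β γ)) t k)
      (Cset (μ.prod ν) e (fun γ => Prod.map (α' γ) (β' γ)) t k) ≤ D + E := by
  have hD' K : hausdorffDist (Cset μ e α' t K) (Cset μ e α t K) ≤ D :=
    hausdorffDist_comm.trans_le (hD K)
  have hE' K : hausdorffDist (Cset ν e β' t K) (Cset ν e β t K) ≤ E :=
    hausdorffDist_comm.trans_le (hE K)
  rw [Cset, Cset, hausdorffDist_closure]
  refine hausdorffDist_le_of_infDist
    (add_nonneg (hausdorffDist_nonneg.trans (hD 0)) (hausdorffDist_nonneg.trans (hE 0)))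
    ?_ ?_ <;> rintro _ ⟨A, hA, rfl⟩ <;> rw [← infDist_closure]
  exacts [infDist_Mpoint_prod_le hα hβ (fun γ => (hα' γ).measurable)
      (fun γ => (hβ' γ).measurable) hD hE hA,
    infDist_Mpoint_prod_le hα' hβ' (fun γ => (hα γ).measurable)
      (fun γ => (hβ γ).measurable) hD' hE' hA]

end Hausdorff

theorem stmt_12_general {Γ : Type*} [Group Γ]
    {X : Type*} [MeasurableSpace X]
    (μ : Measure X) [IsProbabilityMeasure μ]
    (e : ℕ → Γ)
    (aseq bseq : ℕ → MPAction Γ X μ) (a b : MPAction Γ X μ)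
    (ha : ∀ t : ℕ, Tendsto
      (fun n => ⨆ k : ℕ, hausdorffDist (Cset μ e (aseq n).toFun t k) (Cset μ e a.toFun t k))
      atTop (nhds 0))
    (hb : ∀ t : ℕ, Tendsto
      (fun n => ⨆ k : ℕ, hausdorffDist (Cset μ e (bseq n).toFun t k) (Cset μ e b.toFun t k))
      atTop (nhds 0)) :
    ∀ t : ℕ, Tendsto
      (fun n => ⨆ k : ℕ, hausdorffDist
        (Cset (μ.prod μ) e ((aseq n).prod (bseq n)).toFun t k)
        (Cset (μ.prod μ) e (a.prod b).toFun t k))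
      atTop (nhds 0) := by
  intro t
  have le_sup (c c' : MPAction Γ X μ) (K : ℕ) :
      hausdorffDist (Cset μ e c.toFun t K) (Cset μ e c'.toFun t K)
        ≤ ⨆ k, hausdorffDist (Cset μ e c.toFun t k) (Cset μ e c'.toFun t k) :=
    le_ciSup (f := fun k => hausdorffDist (Cset μ e c.toFun t k) (Cset μ e c'.toFun t k))
      ⟨2 * t, Set.forall_mem_range.2 fun k => hausdorffDist_Cset_le
        (fun γ => (c.measurePreserving γ).measurable)
        (fun γ => (c'.measurePreserving γ).measurable)⟩ K
  refine squeeze_zero (fun n => Real.iSup_nonneg fun k => hausdorffDist_nonneg)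
    (fun n => ciSup_le fun k => ?_) (by simpa using (ha t).add (hb t))
  exact hausdorffDist_Cset_prod_le (aseq n).measurePreserving (bseq n).measurePreserving
    a.measurePreserving b.measurePreserving (le_sup _ _) (le_sup _ _) k

/-- If for every `t` we have
`sup_k d_H(C_{t,k}(aₙ), C_{t,k}(a)) → 0` and `sup_k d_H(C_{t,k}(bₙ), C_{t,k}(b)) → 0`
as `n → ∞`, then for every `t`,
`sup_k d_H(C_{t,k}(aₙ × bₙ), C_{t,k}(a × b)) → 0` as `n → ∞`, where `a × b` is the
diagonal product action on `(X × X, μ ⊗ μ)` and `d_H` is the Hausdorff distance induced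
by the sum metric on `[0,1]^{t × k × k}`. -/
theorem stmt_12 {Γ : Type*} [Group Γ] [Countable Γ]
    {X : Type*} [MeasurableSpace X] [StandardBorelSpace X]
    (μ : Measure X) [IsProbabilityMeasure μ]
    (e : ℕ → Γ) (he : Function.Surjective e)
    (aseq bseq : ℕ → MPAction Γ X μ) (a b : MPAction Γ X μ)
    (ha : ∀ t : ℕ, Tendsto
      (fun n => ⨆ k : ℕ, hausdorffDist (Cset μ e (aseq n).toFun t k) (Cset μ e a.toFun t k))
      atTop (nhds 0))
    (hb : ∀ t : ℕ, Tendsto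
      (fun n => ⨆ k : ℕ, hausdorffDist (Cset μ e (bseq n).toFun t k) (Cset μ e b.toFun t k))
      atTop (nhds 0)) :
    ∀ t : ℕ, Tendsto
      (fun n => ⨆ k : ℕ, hausdorffDist
        (Cset (μ.prod μ) e ((aseq n).prod (bseq n)).toFun t k)
        (Cset (μ.prod μ) e (a.prod b).toFun t k))
      atTop (nhds 0) :=
  stmt_12_general μ e aseq bseq a b ha hb
end
end
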